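/- arXiv:1811.06352 — 3 statements merged into one kernel-verified Lean document; each statement's English description precedes it below -/
import Mathlib

section
/- If Δ := (∑_{j=1}^q B_j) − (∑_{i=1}^p A_i) > −1, with all A_i, B_j > 0, then the Fox–Wright series ∑_{k=0}^∞ (∏_{i=1}^p Γ(α_i + k A_i) / ∏_{j=1}^q Γ(β_j + k B_j)) · z^k / k! converges absolutely for every complex number z (assuming all arguments α_i + k A_i and β_j + k B_j avoid the nonpositive integers). -/
/-!
Writing `c k = ∏ Γ(αᵢ + k Aᵢ) / ∏ Γ(βⱼ + k Bⱼ)`, the ratio test reduces the claim to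
`c (k+1) / c k = o(k)`. Log-convexity of `Γ` gives Wendel's limit `Γ(x + a) / (Γ(x) xᵃ) → 1`,
hence `Γ(γ + (k+1) a) / Γ(γ + k a) ~ (a k)ᵃ` and `c (k+1) / c k ~ C k^(∑ Aᵢ - ∑ Bⱼ)`, which is
`o(k)` exactly when `∑ Bⱼ - ∑ Aᵢ > -1`.
-/

open Real Filter Topology

namespace Real

theorem Gamma_add_le_Gamma_mul_rpow {x s : ℝ} (hx : 0 < x) (hs₀ : 0 ≤ s) (hs₁ : s ≤ 1) :
    Gamma (x + s) ≤ Gamma x * x ^ s := by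
  rcases hs₀.eq_or_lt with rfl | hs₀
  · simp
  rcases hs₁.eq_or_lt with rfl | hs₁
  · rw [Gamma_add_one hx.ne', rpow_one, mul_comm]
  -- log-convexity of `Gamma` between `x` and `x + 1`
  have key := Gamma_mul_add_mul_le_rpow_Gamma_mul_rpow_Gamma (s := x) (t := x + 1)
    hx (by linarith) (sub_pos.mpr hs₁) hs₀ (by ring)
  rw [show (1 - s) * x + s * (x + 1) = x + s by ring, Gamma_add_one hx.ne',
    mul_rpow hx.le (Gamma_pos_of_pos hx).le] at key
  calc Gamma (x + s) ≤ Gamma x ^ (1 - s) * (x ^ s * Gamma x ^ s) := key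
    _ = Gamma x * x ^ s := by
      rw [mul_left_comm, ← rpow_add (Gamma_pos_of_pos hx), sub_add_cancel, rpow_one, mul_comm]

theorem rpow_div_add_mul_Gamma_mul_rpow_le_Gamma_add {x s : ℝ} (hx : 0 < x) (hs₀ : 0 ≤ s)
    (hs₁ : s ≤ 1) : (x / (x + s)) ^ (1 - s) * (Gamma x * x ^ s) ≤ Gamma (x + s) := by
  have hxs : 0 < x + s := by linarith
  have key := Gamma_add_le_Gamma_mul_rpow hxs (sub_nonneg.mpr hs₁) (by linarith)
  rw [add_add_sub_cancel, Gamma_add_one hx.ne'] at key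
  calc (x / (x + s)) ^ (1 - s) * (Gamma x * x ^ s)
      = x * Gamma x / (x + s) ^ (1 - s) := by
        have hx1 : x ^ (1 - s) * x ^ s = x := by rw [← rpow_add hx, sub_add_cancel, rpow_one]
        rw [div_rpow hx.le hxs.le]
        linear_combination Gamma x / (x + s) ^ (1 - s) * hx1
    _ ≤ Gamma (x + s) := (div_le_iff₀ (rpow_pos_of_pos hxs _)).mpr key

theorem tendsto_Gamma_add_div_Gamma_mul_rpow_of_le_one {s : ℝ} (hs₀ : 0 ≤ s) (hs₁ : s ≤ 1) :
    Tendsto (fun x ↦ Gamma (x + s) / (Gamma x * x ^ s)) atTop (𝓝 1) := by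
  have hfrac : Tendsto (fun x : ℝ ↦ x / (x + s)) atTop (𝓝 1) := by
    have := (tendsto_const_nhds (x := s)).div_atTop
      (tendsto_atTop_add_const_right _ s tendsto_id) |>.const_sub 1
    rw [sub_zero] at this
    refine this.congr' ?_
    filter_upwards [eventually_gt_atTop (-s)] with x hx
    have : x + s ≠ 0 := by linarith
    simp only [id]
    field_simp
    ring
  have hlow := hfrac.rpow_const (p := 1 - s) (Or.inl one_ne_zero)
  rw [one_rpow] at hlow
  refine tendsto_of_tendsto_of_tendsto_of_le_of_le' hlow tendsto_const_nhds ?_ ?_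
  all_goals filter_upwards [eventually_gt_atTop 0] with x hx
  all_goals have hpos : 0 < Gamma x * x ^ s := mul_pos (Gamma_pos_of_pos hx) (rpow_pos_of_pos hx s)
  · exact (le_div_iff₀ hpos).mpr (rpow_div_add_mul_Gamma_mul_rpow_le_Gamma_add hx hs₀ hs₁)
  · exact (div_le_one hpos).mpr (Gamma_add_le_Gamma_mul_rpow hx hs₀ hs₁)

theorem Gamma_add_add_one_div_Gamma_mul_rpow {x a : ℝ} (hx : 0 < x) (hxa : x + a ≠ 0) :
    Gamma (x + (a + 1)) / (Gamma x * x ^ (a + 1)) =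
      (x + a) / x * (Gamma (x + a) / (Gamma x * x ^ a)) := by
  rw [← add_assoc, Gamma_add_one hxa, rpow_add_one hx.ne']
  have := Gamma_pos_of_pos hx
  have := rpow_pos_of_pos hx a
  field_simp

theorem tendsto_Gamma_add_div_Gamma_mul_rpow {a : ℝ} (ha : 0 ≤ a) :
    Tendsto (fun x ↦ Gamma (x + a) / (Gamma x * x ^ a)) atTop (𝓝 1) := by
  suffices ∀ n : ℕ, ∀ s ∈ Set.Icc (0 : ℝ) 1,
      Tendsto (fun x ↦ Gamma (x + (s + n)) / (Gamma x * x ^ (s + n))) atTop (𝓝 1) by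
    have := this ⌊a⌋₊ (a - ⌊a⌋₊)
      ⟨sub_nonneg.mpr (Nat.floor_le ha), by linarith [Nat.lt_floor_add_one a]⟩
    rwa [sub_add_cancel] at this
  intro n s ⟨hs₀, hs₁⟩
  induction n with
  | zero => simpa using tendsto_Gamma_add_div_Gamma_mul_rpow_of_le_one hs₀ hs₁
  | succ n ih =>
    have hfrac : Tendsto (fun x : ℝ ↦ (x + (s + n)) / x) atTop (𝓝 1) := by
      have := (tendsto_const_nhds (x := s + n)).div_atTop tendsto_id |>.const_add 1
      rw [add_zero] at this
      refine this.congr' ?_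
      filter_upwards [eventually_gt_atTop 0] with x hx
      simp only [id]
      field_simp
    simpa using (hfrac.mul ih).congr' <| by
      filter_upwards [eventually_gt_atTop 0] with x hx
      rw [← add_assoc s, Gamma_add_add_one_div_Gamma_mul_rpow hx (by positivity)]

theorem tendsto_Gamma_add_succ_mul_div_Gamma_add_mul (c : ℝ) {a : ℝ} (ha : 0 < a) :
    Tendsto (fun k : ℕ ↦ Gamma (c + (k + 1) * a) / Gamma (c + k * a) / ((k : ℝ) + 1) ^ a)
      atTop (𝓝 (a ^ a)) := by
  have hlin : Tendsto (fun k : ℕ ↦ c + k * a) atTop atTop :=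
    tendsto_atTop_add_const_left _ _ (tendsto_natCast_atTop_atTop.atTop_mul_const ha)
  have hslope : Tendsto (fun k : ℕ ↦ (c + k * a) / (k + 1)) atTop (𝓝 a) := by
    simpa [mul_comm, add_comm] using tendsto_add_mul_div_add_mul_atTop_nhds c 1 a one_ne_zero
  have := ((tendsto_Gamma_add_div_Gamma_mul_rpow ha.le).comp hlin).mul
    (hslope.rpow_const (p := a) (Or.inl ha.ne'))
  rw [one_mul] at this
  refine this.congr' ?_
  filter_upwards [hlin.eventually_gt_atTop 0] with k hk
  have := Gamma_pos_of_pos hk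
  have := rpow_pos_of_pos hk a
  have : (0 : ℝ) < (k + 1) ^ a := by positivity
  rw [Function.comp_apply, div_rpow hk.le (by positivity), add_mul, one_mul, ← add_assoc]
  field_simp

theorem eventually_prod_Gamma_add_mul_pos {γ : Type*} [Fintype γ] (c : γ → ℝ) {a : γ → ℝ}
    (ha : ∀ i, 0 < a i) : ∀ᶠ k : ℕ in atTop, 0 < ∏ i, Gamma (c i + k * a i) := by
  have : ∀ i, ∀ᶠ k : ℕ in atTop, 0 < c i + k * a i := fun i ↦
    (tendsto_atTop_add_const_left _ _
      (tendsto_natCast_atTop_atTop.atTop_mul_const (ha i))).eventually_gt_atTop 0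
  filter_upwards [eventually_all.mpr this] with k hk
  exact Finset.prod_pos fun i _ ↦ Gamma_pos_of_pos (hk i)

end Real

open Nat in
theorem summable_norm_ofReal_mul_pow_div_factorial {𝕜 : Type*} [RCLike 𝕜] {c : ℕ → ℝ}
    (hc : ∀ᶠ k in atTop, c k ≠ 0)
    (h : Tendsto (fun k : ℕ ↦ c (k + 1) / c k / (k + 1)) atTop (𝓝 0)) (z : 𝕜) :
    Summable (fun k : ℕ ↦ ‖(c k : 𝕜) * z ^ k / (k ! : 𝕜)‖) := by
  have hρ : Tendsto (fun k : ℕ ↦ |c (k + 1) / c k / (k + 1)| * ‖z‖) atTop (𝓝 0) := by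
    simpa using h.abs.mul_const ‖z‖
  refine summable_of_ratio_norm_eventually_le one_half_lt_one ?_
  filter_upwards [hc, hρ.eventually (ge_mem_nhds one_half_pos)] with k hck hk
  rw [norm_norm, norm_norm]
  calc ‖(c (k + 1) : 𝕜) * z ^ (k + 1) / ((k + 1) ! : 𝕜)‖
      = |c (k + 1) / c k / (k + 1)| * ‖z‖ * ‖(c k : 𝕜) * z ^ k / (k ! : 𝕜)‖ := by
        simp only [norm_div, norm_mul, norm_pow, RCLike.norm_ofReal, RCLike.norm_natCast,
          abs_div, factorial_succ, cast_mul, pow_succ]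
        push_cast
        rw [abs_of_pos (by positivity : (0 : ℝ) < k + 1)]
        field_simp
    _ ≤ 1 / 2 * ‖(c k : 𝕜) * z ^ k / (k ! : 𝕜)‖ := by gcongr

section FoxWright

variable {ι κ : Type*} [Fintype ι] [Fintype κ]

noncomputable def foxWrightCoeff (A : ι → ℝ) (B : κ → ℝ) (α : ι → ℝ) (β : κ → ℝ) (k : ℕ) : ℝ :=
  (∏ i, Gamma (α i + k * A i)) / ∏ j, Gamma (β j + k * B j)

variable {A : ι → ℝ} {B : κ → ℝ} (α : ι → ℝ) (β : κ → ℝ)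

theorem eventually_foxWrightCoeff_pos (hA : ∀ i, 0 < A i) (hB : ∀ j, 0 < B j) :
    ∀ᶠ k in atTop, 0 < foxWrightCoeff A B α β k := by
  filter_upwards [eventually_prod_Gamma_add_mul_pos α hA,
    eventually_prod_Gamma_add_mul_pos β hB] with k hα hβ
  exact div_pos hα hβ

theorem foxWrightCoeff_succ_div_div_rpow (k : ℕ) :
    foxWrightCoeff A B α β (k + 1) / foxWrightCoeff A B α β k /
        ((k : ℝ) + 1) ^ (∑ i, A i - ∑ j, B j) =
      (∏ i, Gamma (α i + (k + 1) * A i) / Gamma (α i + k * A i) / ((k : ℝ) + 1) ^ A i) /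
      ∏ j, Gamma (β j + (k + 1) * B j) / Gamma (β j + k * B j) / ((k : ℝ) + 1) ^ B j := by
  have hk : (0 : ℝ) < k + 1 := by positivity
  simp only [foxWrightCoeff, Finset.prod_div_distrib, ← rpow_sum_of_pos hk, rpow_sub hk]
  push_cast
  ring

theorem tendsto_foxWrightCoeff_succ_div_div_rpow (hA : ∀ i, 0 < A i) (hB : ∀ j, 0 < B j) :
    Tendsto (fun k ↦ foxWrightCoeff A B α β (k + 1) / foxWrightCoeff A B α β k /
      ((k : ℝ) + 1) ^ (∑ i, A i - ∑ j, B j)) atTop (𝓝 ((∏ i, A i ^ A i) / ∏ j, B j ^ B j)) := by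
  simp only [foxWrightCoeff_succ_div_div_rpow]
  refine .div (tendsto_finsetProd _ fun i _ ↦ tendsto_Gamma_add_succ_mul_div_Gamma_add_mul _ (hA i))
    (tendsto_finsetProd _ fun j _ ↦ tendsto_Gamma_add_succ_mul_div_Gamma_add_mul _ (hB j)) ?_
  exact (Finset.prod_pos fun j _ ↦ rpow_pos_of_pos (hB j) _).ne'

theorem tendsto_foxWrightCoeff_succ_div_div_succ (hA : ∀ i, 0 < A i) (hB : ∀ j, 0 < B j)
    (hΔ : ∑ j, B j - ∑ i, A i > -1) :
    Tendsto (fun k ↦ foxWrightCoeff A B α β (k + 1) / foxWrightCoeff A B α β k / ((k : ℝ) + 1))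
      atTop (𝓝 0) := by
  have hpow : Tendsto (fun k : ℕ ↦ ((k : ℝ) + 1) ^ (∑ i, A i - ∑ j, B j - 1)) atTop (𝓝 0) := by
    have := (tendsto_rpow_neg_atTop (by linarith : 0 < -(∑ i, A i - ∑ j, B j - 1))).comp
      (tendsto_atTop_add_const_right _ 1 tendsto_natCast_atTop_atTop)
    simpa only [Function.comp_def, neg_neg] using this
  have hsplit (x : ℝ) (k : ℕ) : x / ((k : ℝ) + 1) ^ (∑ i, A i - ∑ j, B j) *
      ((k : ℝ) + 1) ^ (∑ i, A i - ∑ j, B j - 1) = x / (k + 1) := by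
    have hk : (0 : ℝ) < k + 1 := by positivity
    have := (rpow_pos_of_pos hk (∑ i, A i - ∑ j, B j)).ne'
    rw [rpow_sub_one hk.ne']
    field_simp
  simpa only [hsplit, mul_zero] using (tendsto_foxWrightCoeff_succ_div_div_rpow α β hA hB).mul hpow

end FoxWright

theorem foxWright_abs_convergent_of_delta_gt_neg_one_general
    (p q : ℕ) (A : Fin p → ℝ) (B : Fin q → ℝ) (α : Fin p → ℝ) (β : Fin q → ℝ)
    (hA : ∀ i, 0 < A i) (hB : ∀ j, 0 < B j)
    (hΔ : (∑ j, B j) - (∑ i, A i) > -1) :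
    ∀ z : ℂ, Summable (fun k : ℕ =>
      ‖(((∏ i, Real.Gamma (α i + k * A i)) / (∏ j, Real.Gamma (β j + k * B j)) : ℝ) : ℂ)
        * z ^ k / (Nat.factorial k : ℂ)‖) :=
  summable_norm_ofReal_mul_pow_div_factorial
    ((eventually_foxWrightCoeff_pos α β hA hB).mono fun _ h ↦ h.ne')
    (tendsto_foxWrightCoeff_succ_div_div_succ α β hA hB hΔ)

theorem foxWright_abs_convergent_of_delta_gt_neg_one
    (p q : ℕ) (A : Fin p → ℝ) (B : Fin q → ℝ) (α : Fin p → ℝ) (β : Fin q → ℝ)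
    (hA : ∀ i, 0 < A i) (hB : ∀ j, 0 < B j)
    (hα : ∀ i, 0 < α i) (hβ : ∀ j, 0 < β j)
    (hΔ : (∑ j, B j) - (∑ i, A i) > -1) :
    ∀ z : ℂ, Summable (fun k : ℕ =>
      ‖(((∏ i, Real.Gamma (α i + k * A i)) / (∏ j, Real.Gamma (β j + k * B j)) : ℝ) : ℂ)
        * z ^ k / (Nat.factorial k : ℂ)‖) :=
  foxWright_abs_convergent_of_delta_gt_neg_one_general p q A B α β hA hB hΔ
end

section
/- If μ₁ + ν₁ = 0 with μ₁ > 0 (so ν₁ = −μ₁ < 0), and a, b are reals such that a + kμ₁ and b + kν₁ avoid nonpositive integers for all k, then the series ∑_{k=0}^∞ z^k / (Γ(a + kμ₁) Γ(b + kν₁)) converges absolutely for |z| < μ₁^{μ₁} · |ν₁|^{ν₁}. -/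
/-!
Since `ν₁ = -μ₁`, the radius `μ₁ ^ μ₁ * |ν₁| ^ ν₁` equals `1`, so it suffices to bound the
coefficients `1 / (Γ(a + kμ₁) Γ(b - kμ₁))` polynomially in `k`. Euler's reflection formula
gives `1 / |Γ(s)| ≤ Γ(1 - s) / π`, which turns the coefficient into
`Γ(1 - b + kμ₁) / (π Γ(a + kμ₁))`; for an integer `n ≥ 1 - a - b` this ratio is at most
`(a + kμ₁ + n) ^ n / π`, by monotonicity of `Γ` on `[2, ∞)` and the functional equation.
-/

open Real Filter Asymptotics

namespace Real

theorem Gamma_add_nat_le_mul_pow {x : ℝ} (hx : 0 < x) (n : ℕ) :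
    Gamma (x + n) ≤ Gamma x * (x + n) ^ n := by
  induction n with
  | zero => simp
  | succ n ih =>
    have hxn : 0 < x + n := by positivity
    have hΓ : 0 ≤ Gamma x := (Gamma_pos_of_pos hx).le
    have hle : x + n ≤ x + ↑(n + 1) := by push_cast; linarith
    calc Gamma (x + ↑(n + 1)) = (x + n) * Gamma (x + n) := by
          rw [Nat.cast_succ, ← add_assoc, Gamma_add_one hxn.ne']
      _ ≤ (x + n) * (Gamma x * (x + n) ^ n) := by gcongr
      _ ≤ (x + ↑(n + 1)) * (Gamma x * (x + ↑(n + 1)) ^ n) := by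
          gcongr
      _ = Gamma x * (x + ↑(n + 1)) ^ (n + 1) := by ring

theorem Gamma_le_Gamma_mul_pow_of_le_add_nat {x y : ℝ} {n : ℕ} (hx : 0 < x) (hy : 2 ≤ y)
    (hyx : y ≤ x + n) : Gamma y ≤ Gamma x * (x + n) ^ n :=
  (Gamma_strictMonoOn_Ici.monotoneOn hy (hy.trans hyx) hyx).trans (Gamma_add_nat_le_mul_pow hx n)

theorem inv_abs_Gamma_le_Gamma_one_sub_div_pi {s : ℝ} (hs : s < 1) :
    |Gamma s|⁻¹ ≤ Gamma (1 - s) / π := by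
  have hpos : 0 < Gamma (1 - s) := Gamma_pos_of_pos (by linarith)
  rcases eq_or_ne (Gamma s) 0 with h | h
  · rw [h, abs_zero, inv_zero]
    positivity
  have hsin : sin (π * s) ≠ 0 := fun h0 ↦ by
    simpa [h0, h, hpos.ne'] using Gamma_mul_Gamma_one_sub s
  have hπ : π ≤ |Gamma s| * Gamma (1 - s) := by
    rw [← abs_of_pos hpos, ← abs_mul, Gamma_mul_Gamma_one_sub, abs_div, abs_of_pos pi_pos,
      le_div_iff₀ (abs_pos.2 hsin)]
    exact mul_le_of_le_one_right pi_pos.le (abs_sin_le_one _)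
  rwa [le_div_iff₀ pi_pos, inv_mul_le_iff₀ (abs_pos.2 h)]

theorem inv_abs_Gamma_add_mul_inv_abs_Gamma_sub_le {a b x : ℝ} {n : ℕ} (hn : 1 - b ≤ a + n)
    (ha : 2 ≤ a + x) (hb : 2 ≤ 1 - b + x) :
    |Gamma (a + x)|⁻¹ * |Gamma (b - x)|⁻¹ ≤ (a + x + n) ^ n / π := by
  have hΓ : 0 < Gamma (a + x) := Gamma_pos_of_pos (by linarith)
  calc |Gamma (a + x)|⁻¹ * |Gamma (b - x)|⁻¹
      ≤ (Gamma (a + x))⁻¹ * (Gamma (1 - (b - x)) / π) := by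
        rw [abs_of_pos hΓ]
        gcongr
        exact inv_abs_Gamma_le_Gamma_one_sub_div_pi (by linarith)
    _ ≤ (Gamma (a + x))⁻¹ * (Gamma (a + x) * (a + x + n) ^ n / π) := by
        gcongr
        exact Gamma_le_Gamma_mul_pow_of_le_add_nat (by linarith) (by linarith) (by linarith)
    _ = (a + x + n) ^ n / π := by field_simp

end Real

theorem isBigO_add_natCast_mul (c d : ℝ) :
    (fun k : ℕ ↦ c + k * d) =O[atTop] (fun k : ℕ ↦ (k : ℝ)) := by
  refine IsBigO.of_bound (|c| + |d|) ?_
  filter_upwards [eventually_ge_atTop 1] with k hk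
  have hk : (1 : ℝ) ≤ k := by exact_mod_cast hk
  rw [norm_eq_abs, norm_eq_abs, abs_of_nonneg (by positivity : (0 : ℝ) ≤ k)]
  calc |c + k * d| ≤ |c| + k * |d| := by
        simpa [abs_mul] using abs_add_le c (k * d)
    _ ≤ (|c| + |d|) * k := by nlinarith [abs_nonneg c, abs_nonneg d]

theorem summable_add_mul_pow_mul_geometric (c d : ℝ) (n : ℕ) {r : ℝ} (hr : ‖r‖ < 1) :
    Summable (fun k : ℕ ↦ (c + k * d) ^ n * r ^ k) :=
  summable_of_isBigO_nat (summable_pow_mul_geometric_of_norm_lt_one n hr)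
    (((isBigO_add_natCast_mul c d).pow n).mul (isBigO_refl _ _))

theorem fourParamWright_abs_convergent_boundary_general
    (μ₁ ν₁ a b : ℝ) (hμ : 0 < μ₁) (hν : ν₁ = -μ₁) :
    ∀ z : ℂ, ‖z‖ < μ₁ ^ μ₁ * |ν₁| ^ ν₁ → Summable (fun k : ℕ =>
      ‖z ^ k / ((Real.Gamma (a + k * μ₁) : ℂ) * (Real.Gamma (b + k * ν₁) : ℂ))‖) := by
  intro z hz
  have hz1 : ‖‖z‖‖ < 1 := by
    rw [norm_norm]
    rwa [hν, abs_neg, abs_of_pos hμ, ← rpow_add hμ, add_neg_cancel, rpow_zero] at hz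
  obtain ⟨n, hn⟩ := exists_nat_ge (1 - b - a)
  have hkμ : Tendsto (fun k : ℕ ↦ k * μ₁) atTop atTop :=
    tendsto_natCast_atTop_atTop.atTop_mul_const hμ
  refine .of_norm_bounded_eventually_nat
    ((summable_add_mul_pow_mul_geometric (a + n) μ₁ n hz1).div_const π) ?_
  filter_upwards [(tendsto_atTop_add_const_left _ a hkμ).eventually_ge_atTop 2,
    (tendsto_atTop_add_const_left _ (1 - b) hkμ).eventually_ge_atTop 2] with k ha hb
  rw [norm_norm, norm_div, norm_mul, norm_pow, Complex.norm_real, Complex.norm_real, norm_eq_abs,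
    norm_eq_abs, hν, mul_neg, ← sub_eq_add_neg, div_eq_mul_inv, mul_inv]
  calc ‖z‖ ^ k * (|Gamma (a + k * μ₁)|⁻¹ * |Gamma (b - k * μ₁)|⁻¹)
      ≤ ‖z‖ ^ k * ((a + k * μ₁ + n) ^ n / π) := by
        gcongr
        exact inv_abs_Gamma_add_mul_inv_abs_Gamma_sub_le (by linarith) ha hb
    _ = (a + n + k * μ₁) ^ n * ‖z‖ ^ k / π := by ring

theorem fourParamWright_abs_convergent_boundary
    (μ₁ ν₁ a b : ℝ) (hμ : 0 < μ₁) (hν : ν₁ = -μ₁)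
    (hA : ∀ k : ℕ, ∀ m : ℕ, a + k * μ₁ ≠ -(m : ℝ))
    (hB : ∀ k : ℕ, ∀ m : ℕ, b + k * ν₁ ≠ -(m : ℝ)) :
    ∀ z : ℂ, ‖z‖ < μ₁ ^ μ₁ * |ν₁| ^ ν₁ → Summable (fun k : ℕ =>
      ‖z ^ k / ((Real.Gamma (a + k * μ₁) : ℂ) * (Real.Gamma (b + k * ν₁) : ℂ))‖) :=
  fourParamWright_abs_convergent_boundary_general μ₁ ν₁ a b hμ hν
end

section
/- Let ν be a finite nonnegative measure on [0, ρ] with total mass Ψ₀ and first moment Ψ₁ := ∫₀^ρ t dν(t). Then for every λ > 0 and z > 0: Γ(λ)Ψ₀/(1 + (Ψ₁/Ψ₀)z)^λ ≤ Γ(λ) ∫₀^ρ (1+tz)^{−λ} dν(t) ≤ Γ(λ)(Ψ₀ − Ψ₁/ρ) + Γ(λ)(Ψ₁/ρ)(1+ρz)^{−λ} (assuming Ψ₀ > 0 for the lower bound). -/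
/-!
For `z ≥ 0` and `λ ≥ 0` the function `t ↦ (1 + t z)^(-λ)` is convex on `[0, ρ]`. Jensen's
inequality at the mean `Ψ₁ / Ψ₀` of `ν` gives the lower bound, and bounding the function by its
chord between `0` and `ρ` (the Edmundson–Madansky inequality) gives the upper bound.
-/

open MeasureTheory Real Set

theorem convexOn_rpow_of_nonpos {p : ℝ} (hp : p ≤ 0) :
    ConvexOn ℝ (Ioi 0) fun x : ℝ ↦ x ^ p := by
  refine ⟨convex_Ioi 0, fun x hx y hy a b ha hb hab ↦ ?_⟩
  have hxy : 0 < a • x + b • y := (convex_Ioi 0) hx hy ha hb hab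
  have hlog := strictConcaveOn_log_Ioi.concaveOn.2 hx hy ha hb hab
  simp only [smul_eq_mul] at hxy hlog ⊢
  rw [rpow_def_of_pos hxy, rpow_def_of_pos hx, rpow_def_of_pos hy]
  calc exp (log (a * x + b * y) * p) ≤ exp (a * (log x * p) + b * (log y * p)) :=
        exp_le_exp.2 (by nlinarith)
    _ ≤ a * exp (log x * p) + b * exp (log y * p) :=
        convexOn_exp.2 (mem_univ _) (mem_univ _) ha hb hab

theorem convexOn_one_add_mul_rpow {z p : ℝ} (hz : 0 ≤ z) (hp : p ≤ 0) :
    ConvexOn ℝ (Ici 0) fun t : ℝ ↦ (1 + t * z) ^ p := by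
  have hcomp := (convexOn_rpow_of_nonpos hp).comp_affineMap
    (AffineMap.const ℝ ℝ 1 + z • AffineMap.id ℝ ℝ)
  refine (hcomp.subset (fun t (ht : 0 ≤ t) ↦ ?_) (convex_Ici 0)).congr fun t _ ↦ ?_
  · have : 0 < 1 + z * t := by positivity
    simpa using this
  · simp [mul_comm]

theorem ContinuousOn.integrable_of_ae_mem {X E : Type*} [TopologicalSpace X] [T2Space X]
    [MeasurableSpace X] [OpensMeasurableSpace X] [NormedAddCommGroup E] {μ : Measure X}
    [IsFiniteMeasureOnCompacts μ] {f : X → E} {K : Set X} (hK : IsCompact K)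
    (hf : ContinuousOn f K) (hμ : ∀ᵐ x ∂μ, x ∈ K) : Integrable f μ := by
  rw [← Measure.restrict_eq_self_of_ae_mem hμ]
  exact hf.integrableOn_compact hK

theorem ConvexOn.measureReal_univ_mul_map_average_le {α E : Type*} [MeasurableSpace α]
    [NormedAddCommGroup E] [NormedSpace ℝ E] [CompleteSpace E] {μ : Measure α}
    [IsFiniteMeasure μ] {s : Set E} {g : E → ℝ} {f : α → E}
    (hg : ConvexOn ℝ s g) (hgc : ContinuousOn g s) (hsc : IsClosed s)
    (hfs : ∀ᵐ x ∂μ, f x ∈ s) (hfi : Integrable f μ) (hgi : Integrable (g ∘ f) μ) :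
    μ.real univ * g (⨍ x, f x ∂μ) ≤ ∫ x, g (f x) ∂μ := by
  rcases eq_zero_or_neZero μ with rfl | hμ
  · simp
  have hjensen := hg.map_average_le hgc hsc hfs hfi hgi
  rw [average_eq μ fun x ↦ g (f x), smul_eq_mul] at hjensen
  calc μ.real univ * g (⨍ x, f x ∂μ) ≤ μ.real univ * ((μ.real univ)⁻¹ * ∫ x, g (f x) ∂μ) :=
        mul_le_mul_of_nonneg_left hjensen measureReal_univ_pos.le
    _ = ∫ x, g (f x) ∂μ := mul_inv_cancel_left₀ measureReal_univ_ne_zero _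

theorem ConvexOn.sub_mul_le_of_mem_Icc {𝕜 : Type*} [Field 𝕜] [LinearOrder 𝕜]
    [IsStrictOrderedRing 𝕜] {f : 𝕜 → 𝕜} {a b x : 𝕜} (hf : ConvexOn 𝕜 (Icc a b) f)
    (hx : x ∈ Icc a b) :
    (b - a) * f x ≤ (b - x) * f a + (x - a) * f b := by
  rcases hx.1.eq_or_lt with rfl | hax
  · simp
  rcases hx.2.eq_or_lt with rfl | hxb
  · simp
  have hab := (hax.trans hxb).le
  exact hf.secant_mono_aux1 (left_mem_Icc.2 hab) (right_mem_Icc.2 hab) hax hxb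

theorem ConvexOn.sub_mul_integral_le {μ : Measure ℝ} [IsFiniteMeasure μ] {f : ℝ → ℝ} {a b : ℝ}
    (hf : ConvexOn ℝ (Icc a b) f) (hfi : Integrable f μ) (hμ : ∀ᵐ x ∂μ, x ∈ Icc a b) :
    (b - a) * ∫ x, f x ∂μ ≤
      (b * μ.real univ - ∫ x, x ∂μ) * f a + (∫ x, x ∂μ - a * μ.real univ) * f b := by
  have hid : Integrable (fun x ↦ x) μ := continuousOn_id.integrable_of_ae_mem isCompact_Icc hμ
  have hleft : Integrable (fun x ↦ (b - x) * f a) μ := ((integrable_const b).sub hid).mul_const _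
  have hright : Integrable (fun x ↦ (x - a) * f b) μ := (hid.sub (integrable_const a)).mul_const _
  calc (b - a) * ∫ x, f x ∂μ = ∫ x, (b - a) * f x ∂μ := (integral_const_mul _ _).symm
    _ ≤ ∫ x, ((b - x) * f a + (x - a) * f b) ∂μ :=
        integral_mono_ae (hfi.const_mul _) (hleft.add hright)
          (hμ.mono fun x hx ↦ hf.sub_mul_le_of_mem_Icc hx)
    _ = _ := by
        rw [integral_add hleft hright, integral_mul_const, integral_mul_const,
          integral_sub (integrable_const b) hid, integral_sub hid (integrable_const a),
          integral_const, integral_const, smul_eq_mul, smul_eq_mul]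
        ring

theorem two_sided_binomial_bounds_general
    (ρ : ℝ) (hρ : 0 < ρ) (ν : Measure ℝ) [IsFiniteMeasure ν]
    (hsupp : ν (Set.Icc 0 ρ)ᶜ = 0)
    (Ψ₀ Ψ₁ : ℝ) (hΨ₀ : Ψ₀ = (ν Set.univ).toReal)
    (hΨ₁ : Ψ₁ = ∫ t, t ∂ν) :
    ∀ l : ℝ, 0 < l → ∀ z : ℝ, 0 < z →
      Real.Gamma l * Ψ₀ / (1 + (Ψ₁ / Ψ₀) * z) ^ l ≤
        Real.Gamma l * ∫ t, (1 + t * z) ^ (-l) ∂ν ∧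
      Real.Gamma l * ∫ t, (1 + t * z) ^ (-l) ∂ν ≤
        Real.Gamma l * (Ψ₀ - Ψ₁ / ρ) + Real.Gamma l * (Ψ₁ / ρ) * (1 + ρ * z) ^ (-l) := by
  intro l hl z hz
  have hmem : ∀ᵐ t ∂ν, t ∈ Icc 0 ρ := ae_iff.mpr hsupp
  have hmass : ν.real univ = Ψ₀ := hΨ₀.symm
  have hconv : ConvexOn ℝ (Icc 0 ρ) fun t ↦ (1 + t * z) ^ (-l) :=
    (convexOn_one_add_mul_rpow hz.le (neg_nonpos.2 hl.le)).subset Icc_subset_Ici_self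
      (convex_Icc 0 ρ)
  have hcont : ContinuousOn (fun t ↦ (1 + t * z) ^ (-l)) (Icc 0 ρ) :=
    ContinuousOn.rpow_const (by fun_prop) fun t ht ↦ Or.inl (by nlinarith [ht.1])
  have hint := hcont.integrable_of_ae_mem isCompact_Icc hmem
  have hΓ : 0 ≤ Gamma l := (Gamma_pos_of_pos hl).le
  constructor
  · have hjensen := hconv.measureReal_univ_mul_map_average_le hcont isClosed_Icc hmem
      (continuousOn_id.integrable_of_ae_mem isCompact_Icc hmem) hint
    have hΨ₁_nonneg : 0 ≤ Ψ₁ := hΨ₁ ▸ integral_nonneg_of_ae (hmem.mono fun t ht ↦ ht.1)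
    have hbase : 0 ≤ 1 + Ψ₁ / Ψ₀ * z := by
      have : 0 ≤ Ψ₀ := hΨ₀ ▸ ENNReal.toReal_nonneg
      positivity
    rw [average_eq, smul_eq_mul, ← hΨ₁, hmass, inv_mul_eq_div] at hjensen
    calc Gamma l * Ψ₀ / (1 + Ψ₁ / Ψ₀ * z) ^ l = Gamma l * (Ψ₀ * (1 + Ψ₁ / Ψ₀ * z) ^ (-l)) := by
          rw [rpow_neg hbase, mul_div_assoc, div_eq_mul_inv]
      _ ≤ Gamma l * ∫ t, (1 + t * z) ^ (-l) ∂ν := mul_le_mul_of_nonneg_left hjensen hΓ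
  · have hsecant := hconv.sub_mul_integral_le hint hmem
    simp only [sub_zero, zero_mul, add_zero, one_rpow, mul_one, hmass, ← hΨ₁] at hsecant
    calc Gamma l * ∫ t, (1 + t * z) ^ (-l) ∂ν
        ≤ Gamma l * ((ρ * Ψ₀ - Ψ₁ + Ψ₁ * (1 + ρ * z) ^ (-l)) / ρ) :=
          mul_le_mul_of_nonneg_left ((le_div_iff₀' hρ).2 hsecant) hΓ
      _ = Gamma l * (Ψ₀ - Ψ₁ / ρ) + Gamma l * (Ψ₁ / ρ) * (1 + ρ * z) ^ (-l) := by
          field_simp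

theorem two_sided_binomial_bounds
    (ρ : ℝ) (hρ : 0 < ρ) (ν : Measure ℝ) [IsFiniteMeasure ν]
    (hsupp : ν (Set.Icc 0 ρ)ᶜ = 0)
    (Ψ₀ Ψ₁ : ℝ) (hΨ₀ : Ψ₀ = (ν Set.univ).toReal) (hΨ₀pos : 0 < Ψ₀)
    (hΨ₁ : Ψ₁ = ∫ t, t ∂ν) :
    ∀ l : ℝ, 0 < l → ∀ z : ℝ, 0 < z →
      Real.Gamma l * Ψ₀ / (1 + (Ψ₁ / Ψ₀) * z) ^ l ≤
        Real.Gamma l * ∫ t, (1 + t * z) ^ (-l) ∂ν ∧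
      Real.Gamma l * ∫ t, (1 + t * z) ^ (-l) ∂ν ≤
        Real.Gamma l * (Ψ₀ - Ψ₁ / ρ) + Real.Gamma l * (Ψ₁ / ρ) * (1 + ρ * z) ^ (-l) :=
  two_sided_binomial_bounds_general ρ hρ ν hsupp Ψ₀ Ψ₁ hΨ₀ hΨ₁
end
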